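/- The number of partitions of n whose last two parts are equal (partitions of the First Kind, having at least two parts with the two smallest parts equal) equals 2P(n) − P(n+1) for n ≥ 1. -/
import Mathlib


open Multiset

/-- `s` is the smallest part of the partition `p`. -/
def IsSmallest {n : ℕ} (s : ℕ) (p : Nat.Partition n) : Prop :=
  s ∈ p.parts ∧ ∀ x ∈ p.parts, s ≤ x

/-- A partition is of the "Second Kind" if it has exactly one part or its smallest part is
strictly less than every other part, i.e. its smallest part occurs exactly once. -/
def SecondKind {n : ℕ} (p : Nat.Partition n) : Prop :=
  ∃ s, IsSmallest s p ∧ p.parts.count s = 1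

/-- Second kind for the second method: the number ℵ of unit parts satisfies
`1 ≤ ℵ < m` where `m` is the smallest part greater than 1. -/
def SecondKind2 {n : ℕ} (p : Nat.Partition n) : Prop :=
  ∃ m ∈ p.parts, 1 < m ∧ (∀ x ∈ p.parts, 1 < x → m ≤ x) ∧
    1 ≤ p.parts.count 1 ∧ p.parts.count 1 < m

/-- A partition is of the "First Kind" if it has at least two parts and its two smallest
parts are equal, i.e. its smallest part occurs at least twice. -/
def FirstKind {n : ℕ} (p : Nat.Partition n) : Prop :=
  ∃ s, IsSmallest s p ∧ 2 ≤ p.parts.count s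

/-! ### Auxiliary lemmas -/

lemma parts_ne_zero {n : ℕ} (hn : n ≠ 0) (p : Nat.Partition n) : p.parts ≠ 0 := by
  intro h
  apply hn
  rw [← p.parts_sum, h, Multiset.sum_zero]

/-- The smallest part of a partition (junk value `0` if there are no parts). -/
noncomputable def minOf {n : ℕ} (p : Nat.Partition n) : ℕ :=
  p.parts.toFinset.min.getD 0

lemma minOf_isSmallest {n : ℕ} (p : Nat.Partition n) (h : p.parts ≠ 0) :
    IsSmallest (minOf p) p := by
  have hne : p.parts.toFinset.Nonempty := by rwa [Multiset.toFinset_nonempty]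
  obtain ⟨a, ha⟩ := Finset.min_of_nonempty hne
  have hmin : minOf p = a := by rw [minOf, ha]; rfl
  constructor
  · rw [hmin, ← Multiset.mem_toFinset]
    exact Finset.mem_of_min ha
  · intro x hx
    have := Finset.min_le (Multiset.mem_toFinset.2 hx)
    rw [ha] at this
    rw [hmin]
    exact_mod_cast this

lemma isSmallest_unique {n : ℕ} {s t : ℕ} {p : Nat.Partition n}
    (hs : IsSmallest s p) (ht : IsSmallest t p) : s = t :=
  le_antisymm (hs.2 t ht.1) (ht.2 s hs.1)

lemma minOf_eq {n : ℕ} {p : Nat.Partition n} (h : p.parts ≠ 0) {s : ℕ}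
    (hs : IsSmallest s p) : minOf p = s :=
  isSmallest_unique (minOf_isSmallest p h) hs

lemma firstKind_iff_not_secondKind {n : ℕ} (hn : n ≠ 0) (p : Nat.Partition n) :
    FirstKind p ↔ ¬ SecondKind p := by
  have hs := minOf_isSmallest p (parts_ne_zero hn p)
  have hcount : 1 ≤ p.parts.count (minOf p) := Multiset.one_le_count_iff_mem.2 hs.1
  constructor
  · rintro ⟨t, ht, h2⟩ ⟨u, hu, h1⟩
    rw [isSmallest_unique ht hu] at h2
    omega
  · intro h
    refine ⟨minOf p, hs, ?_⟩
    by_contra h2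
    exact h ⟨minOf p, hs, by omega⟩

/-- Removing a `1` from a partition of `n+1` containing a `1`. -/
noncomputable def eraseOne {n : ℕ} (q : {q : Nat.Partition (n + 1) // 1 ∈ q.parts}) :
    Nat.Partition n where
  parts := q.1.parts.erase 1
  parts_pos := fun hx => q.1.parts_pos (Multiset.mem_of_mem_erase hx)
  parts_sum := by
    have h : 1 + (q.1.parts.erase 1).sum = n + 1 := by
      rw [← Multiset.sum_cons, Multiset.cons_erase q.2]
      exact q.1.parts_sum
    omega

noncomputable def equivOne {n : ℕ} :
    {q : Nat.Partition (n + 1) // 1 ∈ q.parts} ≃ Nat.Partition n where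
  toFun := eraseOne
  invFun p := ⟨⟨1 ::ₘ p.parts,
      fun hx => by
        rcases Multiset.mem_cons.1 hx with h | h
        · omega
        · exact p.parts_pos h,
      by rw [Multiset.sum_cons, p.parts_sum, Nat.add_comm]⟩,
    Multiset.mem_cons_self 1 _⟩
  left_inv q := by
    ext1
    ext1
    exact Multiset.cons_erase q.2
  right_inv p := by
    ext1
    exact Multiset.erase_cons_head 1 _

lemma two_le_minOf {n : ℕ} (q : {q : Nat.Partition (n + 1) // 1 ∉ q.parts}) :
    2 ≤ minOf q.1 := by
  have hsm := minOf_isSmallest q.1 (parts_ne_zero (Nat.succ_ne_zero n) q.1)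
  have h1 : 0 < minOf q.1 := q.1.parts_pos hsm.1
  have h2 : minOf q.1 ≠ 1 := by
    intro h'
    rw [h'] at hsm
    exact q.2 hsm.1
  omega

/-- Subtract one from the smallest part of a partition of `n+1` with no unit parts. -/
noncomputable def downMap {n : ℕ} (q : {q : Nat.Partition (n + 1) // 1 ∉ q.parts}) :
    Nat.Partition n := by
  have hsm := minOf_isSmallest q.1 (parts_ne_zero (Nat.succ_ne_zero n) q.1)
  have hm2 : 2 ≤ minOf q.1 := two_le_minOf q
  refine ⟨(minOf q.1 - 1) ::ₘ q.1.parts.erase (minOf q.1), ?_, ?_⟩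
  · intro x hx
    rcases Multiset.mem_cons.1 hx with h | h
    · omega
    · exact q.1.parts_pos (Multiset.mem_of_mem_erase h)
  · have hsum : minOf q.1 + (q.1.parts.erase (minOf q.1)).sum = n + 1 := by
      rw [← Multiset.sum_cons, Multiset.cons_erase hsm.1]
      exact q.1.parts_sum
    rw [Multiset.sum_cons]
    omega

lemma downMap_parts {n : ℕ} (q : {q : Nat.Partition (n + 1) // 1 ∉ q.parts}) :
    (downMap q).parts = (minOf q.1 - 1) ::ₘ q.1.parts.erase (minOf q.1) := rfl

lemma downMap_smallest {n : ℕ} (q : {q : Nat.Partition (n + 1) // 1 ∉ q.parts}) :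
    IsSmallest (minOf q.1 - 1) (downMap q) := by
  have hsm := minOf_isSmallest q.1 (parts_ne_zero (Nat.succ_ne_zero n) q.1)
  constructor
  · rw [downMap_parts]; exact Multiset.mem_cons_self _ _
  · intro x hx
    rw [downMap_parts] at hx
    rcases Multiset.mem_cons.1 hx with h | h
    · omega
    · have := hsm.2 x (Multiset.mem_of_mem_erase h)
      omega

lemma downMap_secondKind {n : ℕ} (q : {q : Nat.Partition (n + 1) // 1 ∉ q.parts}) :
    SecondKind (downMap q) := by
  have hsm := minOf_isSmallest q.1 (parts_ne_zero (Nat.succ_ne_zero n) q.1)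
  have hm2 : 2 ≤ minOf q.1 := two_le_minOf q
  refine ⟨minOf q.1 - 1, downMap_smallest q, ?_⟩
  rw [downMap_parts, Multiset.count_cons_self]
  have hnot : minOf q.1 - 1 ∉ q.1.parts.erase (minOf q.1) := by
    intro h
    have := hsm.2 _ (Multiset.mem_of_mem_erase h)
    omega
  rw [Multiset.count_eq_zero_of_notMem hnot]

/-- Add one to the smallest part of a partition of `n` (`n ≥ 1`). -/
noncomputable def upMap {n : ℕ} (hn : n ≠ 0) (p : {p : Nat.Partition n // SecondKind p}) :
    Nat.Partition (n + 1) := by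
  have hsm := minOf_isSmallest p.1 (parts_ne_zero hn p.1)
  refine ⟨(minOf p.1 + 1) ::ₘ p.1.parts.erase (minOf p.1), ?_, ?_⟩
  · intro x hx
    rcases Multiset.mem_cons.1 hx with h | h
    · omega
    · exact p.1.parts_pos (Multiset.mem_of_mem_erase h)
  · have hsum : minOf p.1 + (p.1.parts.erase (minOf p.1)).sum = n := by
      rw [← Multiset.sum_cons, Multiset.cons_erase hsm.1]
      exact p.1.parts_sum
    rw [Multiset.sum_cons]
    omega

lemma upMap_parts {n : ℕ} (hn : n ≠ 0) (p : {p : Nat.Partition n // SecondKind p}) :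
    (upMap hn p).parts = (minOf p.1 + 1) ::ₘ p.1.parts.erase (minOf p.1) := rfl

lemma count_minOf_eq_one {n : ℕ} (hn : n ≠ 0) (p : {p : Nat.Partition n // SecondKind p}) :
    p.1.parts.count (minOf p.1) = 1 := by
  obtain ⟨s, hs, hc⟩ := p.2
  rwa [minOf_eq (parts_ne_zero hn p.1) hs]

lemma minOf_notMem_erase {n : ℕ} (hn : n ≠ 0) (p : {p : Nat.Partition n // SecondKind p}) :
    minOf p.1 ∉ p.1.parts.erase (minOf p.1) := by
  rw [← Multiset.count_eq_zero, Multiset.count_erase_self, count_minOf_eq_one hn p]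

lemma upMap_no_one {n : ℕ} (hn : n ≠ 0) (p : {p : Nat.Partition n // SecondKind p}) :
    1 ∉ (upMap hn p).parts := by
  have hsm := minOf_isSmallest p.1 (parts_ne_zero hn p.1)
  have hs1 : 1 ≤ minOf p.1 := p.1.parts_pos hsm.1
  rw [upMap_parts]
  intro hx
  rcases Multiset.mem_cons.1 hx with h | h
  · omega
  · have hle := hsm.2 _ (Multiset.mem_of_mem_erase h)
    have hseq : minOf p.1 = 1 := by omega
    rw [← hseq] at h
    exact minOf_notMem_erase hn p h

lemma upMap_smallest {n : ℕ} (hn : n ≠ 0) (p : {p : Nat.Partition n // SecondKind p}) :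
    IsSmallest (minOf p.1 + 1) (upMap hn p) := by
  have hsm := minOf_isSmallest p.1 (parts_ne_zero hn p.1)
  constructor
  · rw [upMap_parts]; exact Multiset.mem_cons_self _ _
  · intro x hx
    rw [upMap_parts] at hx
    rcases Multiset.mem_cons.1 hx with h | h
    · omega
    · have h1 := hsm.2 x (Multiset.mem_of_mem_erase h)
      have h2 : x ≠ minOf p.1 := by
        intro h'
        exact minOf_notMem_erase hn p (h' ▸ h)
      omega

noncomputable def equivNoOne {n : ℕ} (hn : n ≠ 0) :
    {q : Nat.Partition (n + 1) // 1 ∉ q.parts} ≃ {p : Nat.Partition n // SecondKind p} where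
  toFun q := ⟨downMap q, downMap_secondKind q⟩
  invFun p := ⟨upMap hn p, upMap_no_one hn p⟩
  left_inv q := by
    have hsm := minOf_isSmallest q.1 (parts_ne_zero (Nat.succ_ne_zero n) q.1)
    have hm2 : 2 ≤ minOf q.1 := two_le_minOf q
    have hdmin : minOf (downMap q) = minOf q.1 - 1 :=
      minOf_eq (parts_ne_zero hn _) (downMap_smallest q)
    ext1
    ext1
    rw [upMap_parts, hdmin, downMap_parts, Multiset.erase_cons_head]
    have h1 : minOf q.1 - 1 + 1 = minOf q.1 := by omega
    rw [h1, Multiset.cons_erase hsm.1]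
  right_inv p := by
    have hsm := minOf_isSmallest p.1 (parts_ne_zero hn p.1)
    have humin : minOf (upMap hn p) = minOf p.1 + 1 :=
      minOf_eq (parts_ne_zero (Nat.succ_ne_zero n) _) (upMap_smallest hn p)
    ext1
    ext1
    rw [downMap_parts, humin, upMap_parts, Multiset.erase_cons_head, Nat.add_sub_cancel,
      Multiset.cons_erase hsm.1]

lemma card_add_card_compl {α : Type*} [Fintype α] (p : α → Prop) :
    Nat.card {x // p x} + Nat.card {x // ¬ p x} = Nat.card α := by
  classical
  simp only [Nat.card_eq_fintype_card]
  rw [Fintype.card_subtype_compl]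
  have := Fintype.card_subtype_le p
  omega

lemma card_succ {n : ℕ} (hn : n ≠ 0) :
    Nat.card (Nat.Partition (n + 1)) =
      Nat.card {p : Nat.Partition n // SecondKind p} + Nat.card (Nat.Partition n) := by
  have h1 : Nat.card {q : Nat.Partition (n + 1) // 1 ∉ q.parts}
      = Nat.card {p : Nat.Partition n // SecondKind p} := Nat.card_congr (equivNoOne hn)
  have h2 : Nat.card {q : Nat.Partition (n + 1) // 1 ∈ q.parts}
      = Nat.card (Nat.Partition n) := Nat.card_congr equivOne
  have h3 : Nat.card {q : Nat.Partition (n + 1) // 1 ∈ q.parts}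
      + Nat.card {q : Nat.Partition (n + 1) // 1 ∉ q.parts}
      = Nat.card (Nat.Partition (n + 1)) :=
    card_add_card_compl (fun q : Nat.Partition (n + 1) => 1 ∈ q.parts)
  omega

lemma card_split {n : ℕ} (hn : n ≠ 0) :
    Nat.card {p : Nat.Partition n // FirstKind p} +
      Nat.card {p : Nat.Partition n // SecondKind p} = Nat.card (Nat.Partition n) := by
  have h : Nat.card {p : Nat.Partition n // SecondKind p}
      = Nat.card {p : Nat.Partition n // ¬ FirstKind p} := by
    apply Nat.card_congr
    apply Equiv.subtypeEquivRight
    intro p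
    rw [firstKind_iff_not_secondKind hn p]
    tauto
  rw [h]
  exact card_add_card_compl (fun p : Nat.Partition n => FirstKind p)

/-- The number of First-Kind partitions of `n` (two smallest parts equal) equals
`2 P(n) - P(n+1)` for `n ≥ 1`. -/
theorem stmt17 (n : ℕ) (hn : 1 ≤ n) :
    Nat.card {p : Nat.Partition n // FirstKind p} =
      2 * Nat.card (Nat.Partition n) - Nat.card (Nat.Partition (n + 1)) := by
  have hn' : n ≠ 0 := by omega
  have h1 := card_succ hn'
  have h2 := card_split hn'
  omega
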